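/- Let M and N be smooth closed connected manifolds of dimensions m and n respectively with m < 2n - 2, and let f : M → N be a continuous map. If there exist continuous maps f', f'' : M → N which are both homotopic to f and which have no coincidences (f'(x) ≠ f''(x) for all x ∈ M), then f is loose, i.e. f itself is homotopic to a map f₀ with f₀(x) ≠ f(x) for all x ∈ M. -/

import Mathlib

/-!
Deform `f''` along a homotopy `H` from `f'` to `f` so that it keeps avoiding `H_t`. Inside a chart
a point `y` can be pushed radially away from a base point `a` without ever hitting it, and this
push depends continuously on `(a, y)`. Composing finitely many such pushes over a cover of the
compact manifold `N` deforms the space of pairs of distinct points, moving only the second point,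
into pairs at distance at least some fixed `δ > 0`. So a map avoiding `H_t` can be deformed to one
staying `δ` away from `H_t`, which then avoids every `H_{t'}` uniformly `δ`-close to `H_t`. The set
of times `t` at which `H_t` can be avoided is therefore locally constant, hence all of `[0, 1]`.
-/

open scoped Manifold

/-- A continuous map `f : X → Y` is *loose* if there is a continuous map homotopic to `f`
which has no coincidences with `f`. -/
def Loose {X Y : Type*} [TopologicalSpace X] [TopologicalSpace Y] (f : C(X, Y)) : Prop :=
  ∃ g : C(X, Y), f.Homotopic g ∧ ∀ x, g x ≠ f x

open Metric Set Topology unitInterval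

section RadialPush

variable {E : Type*} [NormedAddCommGroup E] [NormedSpace ℝ E]

noncomputable def radialPush (r : ℝ) (a y : E) : E :=
  a + (max (dist y a) r / dist y a) • (y - a)

theorem radialPush_of_le {r : ℝ} {a y : E} (h : r ≤ dist y a) : radialPush r a y = y := by
  rcases eq_or_ne y a with rfl | hya
  · simp [radialPush]
  · rw [radialPush, max_eq_left h, div_self (dist_ne_zero.2 hya), one_smul, add_sub_cancel]

theorem dist_radialPush_left {r : ℝ} {a y : E} (hya : y ≠ a) :
    dist (radialPush r a y) a = max (dist y a) r := by
  have hpos : 0 < dist y a := dist_pos.2 hya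
  rw [dist_eq_norm, radialPush, add_sub_cancel_left, norm_smul, ← dist_eq_norm, Real.norm_eq_abs,
    abs_of_nonneg (div_nonneg (hpos.le.trans (le_max_left _ _)) hpos.le),
    div_mul_cancel₀ _ hpos.ne']

theorem dist_radialPush_left_le (r : ℝ) (a y : E) :
    dist (radialPush r a y) a ≤ max (dist y a) r := by
  rcases eq_or_ne y a with rfl | hya
  · simp [radialPush]
  · exact (dist_radialPush_left hya).le

theorem radialPush_ne {r : ℝ} {a y : E} (hya : y ≠ a) : radialPush r a y ≠ a := by
  rw [← dist_pos, dist_radialPush_left hya]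
  exact (dist_pos.2 hya).trans_le (le_max_left _ _)

theorem ContinuousOn.radialPush {X : Type*} [TopologicalSpace X] {r : X → ℝ} {a y : X → E}
    {s : Set X} (hr : ContinuousOn r s) (ha : ContinuousOn a s) (hy : ContinuousOn y s)
    (hne : ∀ x ∈ s, y x ≠ a x) :
    ContinuousOn (fun x => _root_.radialPush (r x) (a x) (y x)) s := by
  have hdist : ContinuousOn (fun x => dist (y x) (a x)) s :=
    continuous_dist.comp_continuousOn (hy.prodMk ha)
  exact ha.add (((hdist.sup hr).div hdist fun x hx => dist_ne_zero.2 (hne x hx)).smul (hy.sub ha))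

end RadialPush

abbrev OffDiag (N : Type*) := {q : N × N // q.1 ≠ q.2}

section PushesApart

variable {N : Type*} [MetricSpace N]

/-- Only `Φ` itself, not the homotopy, has to fix the first point: precomposed with a pair of maps
`(v, u)` and projected to the second factor, the homotopy deforms `u` alone. -/
def PushesApartOver (U : Set N) : Prop :=
  ∃ Φ : C(OffDiag N, OffDiag N), (∀ q, (Φ q).1.1 = q.1.1) ∧ (ContinuousMap.id _).Homotopic Φ ∧
    ∃ δ > 0, ∀ q : OffDiag N, q.1.1 ∈ U → δ ≤ dist (Φ q).1.1 (Φ q).1.2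

theorem pushesApartOver_empty : PushesApartOver (∅ : Set N) :=
  ⟨.id _, fun _ => rfl, .refl _, 1, one_pos, fun _ h => h.elim⟩

theorem PushesApartOver.mono {U V : Set N} (hUV : U ⊆ V) (h : PushesApartOver V) :
    PushesApartOver U :=
  let ⟨Φ, hfib, hhom, δ, hδ, hsep⟩ := h
  ⟨Φ, hfib, hhom, δ, hδ, fun q hq => hsep q (hUV hq)⟩

theorem PushesApartOver.of_family {U : Set N} (P : I → N → N → N)
    (hP : Continuous fun p : I × OffDiag N => P p.1 p.2.1.1 p.2.1.2)
    (hP₀ : ∀ a y, P 0 a y = y) (hPne : ∀ s a y, a ≠ y → a ≠ P s a y)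
    (hsep : ∃ δ > 0, ∀ a ∈ U, ∀ y, a ≠ y → δ ≤ dist a (P 1 a y)) :
    PushesApartOver U := by
  let H : C(I × OffDiag N, OffDiag N) :=
    ⟨fun p => ⟨(p.2.1.1, P p.1 p.2.1.1 p.2.1.2), hPne _ _ _ p.2.2⟩,
      (continuous_subtype_val.comp continuous_snd).fst.prodMk hP |>.subtype_mk _⟩
  obtain ⟨δ, hδ, hsep⟩ := hsep
  refine ⟨H.curry 1, fun _ => rfl, ⟨⟨H, fun q => ?_, fun _ => rfl⟩⟩, δ, hδ,
    fun q hq => hsep _ hq _ q.2⟩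
  ext <;> simp [H, hP₀]

variable [CompactSpace N]

theorem exists_pos_le_dist_apply (Φ : C(OffDiag N, OffDiag N)) {η : ℝ} (hη : 0 < η) :
    ∃ η' > 0, ∀ q : OffDiag N, η ≤ dist q.1.1 q.1.2 → η' ≤ dist (Φ q).1.1 (Φ q).1.2 := by
  have hK : IsCompact {q : OffDiag N | η ≤ dist q.1.1 q.1.2} := by
    refine Topology.IsInducing.subtypeVal.isCompact_preimage'
      (isClosed_le continuous_const continuous_dist).isCompact fun p hp => ⟨⟨p, ?_⟩, rfl⟩
    exact fun h => by simp [h] at hp; linarith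
  exact hK.exists_forall_le' (by fun_prop) fun q _ => dist_pos.2 (Φ q).2

theorem PushesApartOver.union {U V : Set N} (hU : PushesApartOver U) (hV : PushesApartOver V) :
    PushesApartOver (U ∪ V) := by
  obtain ⟨Φ, hΦfib, hΦhom, δ, hδ, hΦsep⟩ := hU
  obtain ⟨Ψ, hΨfib, hΨhom, η, hη, hΨsep⟩ := hV
  obtain ⟨δ', hδ', hΨδ⟩ := exists_pos_le_dist_apply Ψ hδ
  refine ⟨Ψ.comp Φ, fun q => (hΨfib _).trans (hΦfib q), hΨhom.comp hΦhom, min δ' η,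
    lt_min hδ' hη, ?_⟩
  rintro q (hq | hq)
  · exact (min_le_left _ _).trans (hΨδ _ (hΦsep q hq))
  · exact (min_le_right _ _).trans (hΨsep _ ((hΦfib q).symm ▸ hq))

theorem pushesApartOver_univ (h : ∀ p : N, ∃ U ∈ 𝓝 p, PushesApartOver U) :
    PushesApartOver (univ : Set N) :=
  isCompact_univ.induction_on pushesApartOver_empty (fun _ _ => PushesApartOver.mono)
    (fun _ _ => PushesApartOver.union) fun p _ => by simpa only [nhdsWithin_univ] using h p

end PushesApart

theorem IsCompact.exists_forall_dist_lt_imp_mem {N : Type*} [PseudoMetricSpace N] {K : Set N}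
    (hK : IsCompact K) {G : Set (N × N)} (hG : IsOpen G) (hKG : ∀ a ∈ K, (a, a) ∈ G) :
    ∃ δ > 0, ∀ a ∈ K, ∀ w, dist a w < δ → (a, w) ∈ G := by
  have hdiag : IsCompact ((fun a => (a, a)) '' K) := hK.image (continuous_id.prodMk continuous_id)
  obtain ⟨δ, hδ, hsub⟩ :=
    hdiag.exists_thickening_subset_open hG (by rintro _ ⟨a, ha, rfl⟩; exact hKG a ha)
  refine ⟨δ, hδ, fun a ha w hw => hsub (mem_thickening_iff.2 ⟨(a, a), ⟨a, ha, rfl⟩, ?_⟩)⟩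
  simpa [Prod.dist_eq, dist_comm] using hw

theorem OpenPartialHomeomorph.isCompact_source_inter_preimage_closedBall {X E : Type*}
    [TopologicalSpace X] [PseudoMetricSpace E] [ProperSpace E] {φ : OpenPartialHomeomorph X E}
    {c : E} {ε : ℝ} (hε : closedBall c ε ⊆ φ.target) :
    IsCompact (φ.source ∩ φ ⁻¹' closedBall c ε) := by
  rw [← φ.symm_image_eq_source_inter_preimage hε]
  exact (isCompact_closedBall c ε).image_of_continuousOn (φ.continuousOn_symm.mono hε)

namespace OpenPartialHomeomorph

variable {E N : Type*} [NormedAddCommGroup E] [NormedSpace ℝ E] [MetricSpace N]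
  (φ : OpenPartialHomeomorph N E) (c : E) (ε : ℝ)

open scoped Classical in
/-- The radius `s * (ε - dist (φ a) c)` vanishes as `φ a` leaves `closedBall c ε`, so the push is
trivial off a compact part of the chart and the pushed point never leaves `closedBall c ε`. -/
noncomputable def chartPush (s : I) (a y : N) : N :=
  if a ∈ φ.source ∧ y ∈ φ.source then
    φ.symm (radialPush (s * (ε - dist (φ a) c)) (φ a) (φ y))
  else y

variable {φ c ε}

theorem chartPush_of_le {s : I} {a y : N} (hy : y ∈ φ.source)
    (h : s * (ε - dist (φ a) c) ≤ dist (φ y) (φ a)) : φ.chartPush c ε s a y = y := by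
  unfold chartPush
  split_ifs
  · rw [radialPush_of_le h, φ.left_inv hy]
  · rfl

theorem chartPush_zero (a y : N) : φ.chartPush c ε 0 a y = y := by
  by_cases hy : y ∈ φ.source
  · exact chartPush_of_le hy (by simp)
  · simp [chartPush, hy]

theorem chartPush_of_notMem (s : I) {a y : N}
    (h : (a, y) ∉ (φ.source ∩ φ ⁻¹' closedBall c ε) ×ˢ (φ.source ∩ φ ⁻¹' closedBall c ε)) :
    φ.chartPush c ε s a y = y := by
  by_cases hsrc : a ∈ φ.source ∧ y ∈ φ.source
  · refine chartPush_of_le hsrc.2 ?_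
    simp only [mem_prod, mem_inter_iff, mem_preimage, mem_closedBall, hsrc, true_and,
      not_and_or, not_le] at h
    have := dist_triangle (φ y) (φ a) c
    rcases le_total 0 (ε - dist (φ a) c) with hpos | hneg
    · rcases h with h | h <;> nlinarith [s.2.2]
    · nlinarith [s.2.1, dist_nonneg (x := φ y) (y := φ a)]
  · simp [chartPush, hsrc]

theorem radialPush_mem_target (hε : closedBall c ε ⊆ φ.target) (s : I) {a y : N}
    (hy : y ∈ φ.source) : radialPush (s * (ε - dist (φ a) c)) (φ a) (φ y) ∈ φ.target := by
  by_cases h : s * (ε - dist (φ a) c) ≤ dist (φ y) (φ a)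
  · rw [radialPush_of_le h]
    exact φ.map_source hy
  · refine hε (mem_closedBall.2 ?_)
    have hle := dist_radialPush_left_le (s * (ε - dist (φ a) c)) (φ a) (φ y)
    rw [max_eq_right (not_le.1 h).le] at hle
    have := dist_triangle (radialPush (s * (ε - dist (φ a) c)) (φ a) (φ y)) (φ a) c
    have hpos : 0 ≤ ε - dist (φ a) c := by
      by_contra! hneg
      nlinarith [s.2.1, dist_nonneg (x := φ y) (y := φ a)]
    nlinarith [s.2.2]

theorem chartPush_ne (hε : closedBall c ε ⊆ φ.target) (s : I) {a y : N} (hay : a ≠ y) :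
    a ≠ φ.chartPush c ε s a y := by
  unfold chartPush
  split_ifs with h
  · intro heq
    have := congrArg φ heq
    rw [φ.right_inv (radialPush_mem_target hε s h.2)] at this
    exact radialPush_ne (φ.injOn.ne h.2 h.1 hay.symm) this.symm
  · exact hay

theorem le_dist_chartPush_one (hε : closedBall c ε ⊆ φ.target) {a y : N} (ha : a ∈ φ.source)
    (hay : a ≠ y) (hsrc : φ.chartPush c ε 1 a y ∈ φ.source) :
    ε - dist (φ a) c ≤ dist (φ (φ.chartPush c ε 1 a y)) (φ a) := by
  unfold chartPush at hsrc ⊢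
  split_ifs at hsrc ⊢ with h
  · rw [φ.right_inv (radialPush_mem_target hε 1 h.2),
      dist_radialPush_left (φ.injOn.ne h.2 h.1 hay.symm), Icc.coe_one, one_mul]
    exact le_max_right _ _
  · exact absurd ⟨ha, hsrc⟩ h

theorem continuous_chartPush [ProperSpace E] (hε : closedBall c ε ⊆ φ.target) :
    Continuous fun p : I × OffDiag N => φ.chartPush c ε p.1 p.2.1.1 p.2.1.2 := by
  have hK := isCompact_source_inter_preimage_closedBall hε
  set K := φ.source ∩ φ ⁻¹' closedBall c ε
  let inChart : Set (I × OffDiag N) := {p | p.2.1.1 ∈ φ.source ∧ p.2.1.2 ∈ φ.source}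
  let offK : Set (I × OffDiag N) := {p | (p.2.1.1, p.2.1.2) ∉ K ×ˢ K}
  have hcover : inChart ∪ offK = univ :=
    eq_univ_of_forall fun p => or_iff_not_imp_left.2 fun hp hpK => hp ⟨hpK.1.1, hpK.2.1⟩
  rw [← continuousOn_univ, ← hcover]
  refine ContinuousOn.union_of_isOpen ?_ ?_ ?_ ?_
  · have hφa : ContinuousOn (fun p : I × OffDiag N => φ p.2.1.1) inChart :=
      φ.continuousOn.comp (by fun_prop) fun _ hp => hp.1
    have hφy : ContinuousOn (fun p : I × OffDiag N => φ p.2.1.2) inChart :=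
      φ.continuousOn.comp (by fun_prop) fun _ hp => hp.2
    have hr : ContinuousOn (fun p : I × OffDiag N => (p.1 : ℝ) * (ε - dist (φ p.2.1.1) c))
        inChart :=
      (continuous_subtype_val.comp continuous_fst).continuousOn.mul
        (continuousOn_const.sub (continuous_dist.comp_continuousOn (hφa.prodMk continuousOn_const)))
    refine ContinuousOn.congr ?_ fun p hp => if_pos hp
    exact φ.continuousOn_symm.comp
      (hr.radialPush hφa hφy fun p hp => φ.injOn.ne hp.2 hp.1 p.2.2.symm)
      fun p hp => radialPush_mem_target hε p.1 hp.2
  · exact continuous_snd.subtype_val.snd.continuousOn.congr fun p hp => chartPush_of_notMem p.1 hp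
  · exact (φ.open_source.preimage (by fun_prop)).inter (φ.open_source.preimage (by fun_prop))
  · exact (hK.prod hK).isClosed.isOpen_compl.preimage (by fun_prop)

end OpenPartialHomeomorph

theorem exists_mem_nhds_pushesApartOver {E N : Type*} [NormedAddCommGroup E] [NormedSpace ℝ E]
    [ProperSpace E] [MetricSpace N] [ChartedSpace E N] (p : N) :
    ∃ U ∈ 𝓝 p, PushesApartOver U := by
  set φ := chartAt E p
  obtain ⟨ε, hε, hball⟩ :=
    nhds_basis_closedBall.mem_iff.1 (φ.open_target.mem_nhds (mem_chart_target E p))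
  set c := φ p
  have hG : IsOpen ((φ.source ×ˢ φ.source) ∩
      (fun q : N × N => dist (φ q.2) (φ q.1)) ⁻¹' Iio (ε / 2)) :=
    (continuous_dist.comp_continuousOn
      ((φ.continuousOn.comp continuousOn_snd fun _ h => h.2).prodMk
        (φ.continuousOn.comp continuousOn_fst fun _ h => h.1))).isOpen_inter_preimage
      (φ.open_source.prod φ.open_source) isOpen_Iio
  obtain ⟨δ, hδ, hδG⟩ := (φ.isCompact_source_inter_preimage_closedBall
    ((closedBall_subset_closedBall (half_le_self hε.le)).trans hball)).exists_forall_dist_lt_imp_mem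
    hG fun a ha => ⟨⟨ha.1, ha.1⟩, by simpa using half_pos hε⟩
  refine ⟨φ.source ∩ φ ⁻¹' ball c (ε / 2), (φ.isOpen_inter_preimage isOpen_ball).mem_nhds
    ⟨mem_chart_source E p, mem_ball_self (half_pos hε)⟩,
    .of_family (φ.chartPush c ε) (φ.continuous_chartPush hball) φ.chartPush_zero
      (fun s _ _ => φ.chartPush_ne hball s) ⟨δ, hδ, fun a ha y hay => ?_⟩⟩
  by_contra! hlt
  obtain ⟨⟨-, hsrc⟩, hnear⟩ := hδG a ⟨ha.1, ball_subset_closedBall ha.2⟩ _ hlt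
  have hfar := φ.le_dist_chartPush_one hball ha.1 hay hsrc
  have hac : dist (φ a) c < ε / 2 := ha.2
  simp only [mem_preimage, mem_Iio] at hnear
  linarith

section Following

variable {X N : Type*} [TopologicalSpace X] [MetricSpace N]

theorem PushesApartOver.exists_homotopic_le_dist (h : PushesApartOver (univ : Set N)) :
    ∃ δ > 0, ∀ u v : C(X, N), (∀ x, v x ≠ u x) →
      ∃ u' : C(X, N), u.Homotopic u' ∧ ∀ x, δ ≤ dist (v x) (u' x) := by
  obtain ⟨Φ, hfib, hhom, δ, hδ, hsep⟩ := h
  refine ⟨δ, hδ, fun u v huv => ?_⟩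
  let pair : C(X, OffDiag N) := ⟨fun x => ⟨(v x, u x), huv x⟩, by fun_prop⟩
  let snd : C(OffDiag N, N) := ContinuousMap.snd.comp ⟨Subtype.val, continuous_subtype_val⟩
  refine ⟨snd.comp (Φ.comp pair), (ContinuousMap.Homotopic.refl snd).comp
    (hhom.comp (.refl pair)), fun x => ?_⟩
  simpa [snd, pair, hfib] using hsep (pair x) trivial

theorem PushesApartOver.exists_homotopic_ne_of_homotopic [CompactSpace X]
    (h : PushesApartOver (univ : Set N)) {u v w : C(X, N)} (huv : ∀ x, v x ≠ u x)
    (hvw : v.Homotopic w) : ∃ g : C(X, N), u.Homotopic g ∧ ∀ x, w x ≠ g x := by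
  obtain ⟨δ, hδ, hpush⟩ := h.exists_homotopic_le_dist (X := X)
  obtain ⟨H⟩ := hvw
  let Avoids (t : I) : Prop := ∃ g : C(X, N), u.Homotopic g ∧ ∀ x, H.curry t x ≠ g x
  have hstep : ∀ t t', dist (H.curry t) (H.curry t') < δ → Avoids t → Avoids t' := by
    rintro t t' hdist ⟨g, hg, hne⟩
    obtain ⟨g', hg', hδg'⟩ := hpush g (H.curry t) hne
    refine ⟨g', hg.trans hg', fun x heq => ?_⟩
    have := (ContinuousMap.dist_apply_le_dist x).trans_lt hdist
    linarith [hδg' x, heq ▸ this]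
  have hloc : IsLocallyConstant Avoids := (IsLocallyConstant.iff_eventually_eq _).2 fun t =>
    (H.curry.continuous.tendsto t).eventually (ball_mem_nhds _ hδ) |>.mono fun t' ht' =>
      propext ⟨hstep t' t ht', hstep t t' (by rwa [dist_comm])⟩
  have h₀ : Avoids 0 := ⟨u, .refl u, by simpa using huv⟩
  obtain ⟨g, hg, hne⟩ := hloc.apply_eq_of_preconnectedSpace 0 1 ▸ h₀
  exact ⟨g, hg, by simpa using hne⟩

end Following

theorem loose_of_homotopic_coincidence_free_pair_general
    {n : ℕ} {M N : Type*}
    [TopologicalSpace M] [CompactSpace M]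
    [TopologicalSpace N] [ChartedSpace (EuclideanSpace ℝ (Fin n)) N]
    [CompactSpace N] [T2Space N]
    (f f' f'' : C(M, N)) (h' : f.Homotopic f') (h'' : f.Homotopic f'')
    (hfree : ∀ x : M, f' x ≠ f'' x) :
    Loose f := by
  have := Manifold.metrizableSpace (𝓡 n) N
  let := TopologicalSpace.metrizableSpaceMetric N
  have hpush : PushesApartOver (univ : Set N) :=
    pushesApartOver_univ (exists_mem_nhds_pushesApartOver (E := EuclideanSpace ℝ (Fin n)))
  obtain ⟨g, hg, hne⟩ := hpush.exists_homotopic_ne_of_homotopic hfree h'.symm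
  exact ⟨g, h''.trans hg, fun x => (hne x).symm⟩

theorem loose_of_homotopic_coincidence_free_pair
    {m n : ℕ} (hdim : (m : ℤ) < 2 * n - 2) {M N : Type*}
    [TopologicalSpace M] [ChartedSpace (EuclideanSpace ℝ (Fin m)) M]
    [IsManifold (𝓡 m) (⊤ : ℕ∞) M] [CompactSpace M] [ConnectedSpace M] [T2Space M]
    [TopologicalSpace N] [ChartedSpace (EuclideanSpace ℝ (Fin n)) N]
    [IsManifold (𝓡 n) (⊤ : ℕ∞) N] [CompactSpace N] [ConnectedSpace N] [T2Space N]
    (f f' f'' : C(M, N)) (h' : f.Homotopic f') (h'' : f.Homotopic f'')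
    (hfree : ∀ x : M, f' x ≠ f'' x) :
    Loose f :=
  loose_of_homotopic_coincidence_free_pair_general (n := n) f f' f'' h' h'' hfree
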